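/- If Γ is a finite bi-dismantlable simple graph with more than one vertex, then the automorphism group of Γ stabilizes (setwise) the vertex set of a complete bipartite subgraph of Γ. -/

import Mathlib

/-- `v` is bi-dominated by `u` within the induced subgraph on `s`:
every neighbour of `v` in `s` is a neighbour of `u`. -/
def BiDominatedIn {V : Type*} (G : SimpleGraph V) (s : Finset V) (v u : V) : Prop :=
  v ∈ s ∧ u ∈ s ∧ v ≠ u ∧ ∀ x ∈ s, G.Adj v x → G.Adj u x

/-- The induced subgraph on `s` is a complete bipartite graph (biclique). -/
def IsBiclique {V : Type*} [DecidableEq V] (G : SimpleGraph V) (s : Finset V) : Prop :=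
  ∃ A B : Finset V, A.Nonempty ∧ B.Nonempty ∧ Disjoint A B ∧ A ∪ B = s ∧
    ∀ a ∈ s, ∀ b ∈ s, (G.Adj a b ↔ ((a ∈ A ∧ b ∈ B) ∨ (a ∈ B ∧ b ∈ A)))

/-- `s` (as an induced subgraph of `G`) is bi-dismantlable: a biclique can be obtained
by successively deleting bi-dominated vertices. -/
inductive BiDismantlable {V : Type*} [DecidableEq V] (G : SimpleGraph V) : Finset V → Prop
  | biclique (s : Finset V) : IsBiclique G s → BiDismantlable G s
  | step (s : Finset V) (v u : V) : BiDominatedIn G s v u →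
      BiDismantlable G (s.erase v) → BiDismantlable G s

/-!
Call a vertex of `s` dominant if its neighbourhood in `s` is maximal under inclusion.
Bi-dismantlability survives the removal of any bi-dominated vertex: two removals commute unless
the two vertices are twins, and twins are exchanged by a transposition. Every vertex is
bi-dominated by a dominant one, so the dominant vertices again form a bi-dismantlable set, and
since this set is defined from `G` and `s` alone it is stabilised by every automorphism that
stabilises `s`. Iterating, we reach a bi-dismantlable set in which every bi-domination is mutual,
i.e. between twins; removing twins one at a time and putting them back shows that it is a
biclique.
-/

section

variable {V : Type*} {G : SimpleGraph V} {s t A B : Finset V} {u v w x : V}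

theorem BiDominatedIn.not_adj (h : BiDominatedIn G s v u) : ¬G.Adj v u :=
  fun hvu => G.irrefl (h.2.2.2 u h.2.1 hvu)

theorem BiDominatedIn.mono (h : BiDominatedIn G s v u) (hts : t ⊆ s) (hv : v ∈ t)
    (hu : u ∈ t) : BiDominatedIn G t v u :=
  ⟨hv, hu, h.2.2.1, fun y hy => h.2.2.2 y (hts hy)⟩

namespace SimpleGraph

def neighborSetIn (G : SimpleGraph V) (s : Finset V) (v : V) : Set V :=
  (s : Set V) ∩ G.neighborSet v

theorem neighborSetIn_subset_iff :
    neighborSetIn G s v ⊆ neighborSetIn G s u ↔ ∀ x ∈ s, G.Adj v x → G.Adj u x := by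
  simp +contextual [neighborSetIn, Set.subset_def]

noncomputable def dominantCore (G : SimpleGraph V) (s : Finset V) : Finset V := by
  classical exact s.filter (MaximalFor (· ∈ s) (neighborSetIn G s))

theorem mem_dominantCore :
    v ∈ dominantCore G s ↔ MaximalFor (· ∈ s) (neighborSetIn G s) v := by
  classical
  simp only [dominantCore, Finset.mem_filter, and_iff_right_iff_imp]
  exact fun h => h.1

theorem dominantCore_subset : dominantCore G s ⊆ s := fun _ hv => (mem_dominantCore.mp hv).1

theorem exists_mem_dominantCore_neighborSetIn_subset (hv : v ∈ s) :
    ∃ u ∈ dominantCore G s, neighborSetIn G s v ⊆ neighborSetIn G s u := by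
  classical
  obtain ⟨u, hu, hmax⟩ := Finset.exists_maximalFor (neighborSetIn G s)
    {u ∈ s | neighborSetIn G s v ⊆ neighborSetIn G s u} ⟨v, by simp [hv]⟩
  rw [Finset.mem_filter] at hu
  refine ⟨u, mem_dominantCore.mpr ⟨hu.1, fun w hw huw => hmax ?_ huw⟩, hu.2⟩
  exact Finset.mem_filter.mpr ⟨hw, hu.2.trans huw⟩

end SimpleGraph

open SimpleGraph

theorem BiDominatedIn.symm_of_dominantCore_eq (hvu : BiDominatedIn G s v u)
    (h : G.dominantCore s = s) : BiDominatedIn G s u v := by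
  have hv : MaximalFor (· ∈ s) (G.neighborSetIn s) v :=
    mem_dominantCore.mp (by rw [h]; exact hvu.1)
  exact ⟨hvu.2.1, hvu.1, hvu.2.2.1.symm,
    neighborSetIn_subset_iff.mp (hv.2 hvu.2.1 (neighborSetIn_subset_iff.mpr hvu.2.2.2))⟩

variable [DecidableEq V]

theorem Finset.swap_apply_mem (hv : v ∈ s) (hw : w ∈ s) (hu : u ∈ s) :
    Equiv.swap v w u ∈ s := by
  rw [Equiv.swap_apply_def]
  split_ifs <;> assumption

theorem Finset.image_swap_erase (hv : v ∈ s) (hw : w ∈ s) :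
    (s.erase w).image (Equiv.swap v w) = s.erase v := by
  have himage : s.image (Equiv.swap v w) = s :=
    Finset.eq_of_subset_of_card_le (Finset.image_subset_iff.mpr fun _ => s.swap_apply_mem hv hw)
      (Finset.card_image_of_injective _ (Equiv.swap v w).injective).ge
  rw [Finset.image_erase (Equiv.swap v w).injective, himage, Equiv.swap_apply_right]

theorem Finset.image_eq_self_iff_of_bijective {f : V → V} (hf : f.Bijective) :
    s.image f = s ↔ ∀ x, f x ∈ s ↔ x ∈ s := by
  refine ⟨fun h x => by rw [← hf.1.mem_finset_image (s := s) (a := x), h],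
    fun h => Finset.ext fun y => ?_⟩
  obtain ⟨x, rfl⟩ := hf.2 y
  rw [hf.1.mem_finset_image, h]

namespace SimpleGraph

theorem adj_swap_apply_iff (htwin : ∀ y ∈ s, G.Adj v y ↔ G.Adj w y) (a : V) {y : V}
    (hy : y ∈ s) : G.Adj (Equiv.swap v w a) y ↔ G.Adj a y := by
  rw [Equiv.swap_apply_def]
  split_ifs with hav haw
  · exact hav ▸ (htwin y hy).symm
  · exact haw ▸ htwin y hy
  · rfl

theorem neighborSetIn_map (φ : G ≃g G) (hφ : s.image φ = s) (v : V) :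
    G.neighborSetIn s (φ v) = φ '' G.neighborSetIn s v := by
  ext y
  obtain ⟨y, rfl⟩ := φ.surjective y
  rw [φ.injective.mem_set_image]
  simp [neighborSetIn, (Finset.image_eq_self_iff_of_bijective φ.bijective).mp hφ, φ.map_adj_iff]

theorem image_dominantCore (φ : G ≃g G) (hφ : s.image φ = s) :
    (G.dominantCore s).image φ = G.dominantCore s := by
  have hmem := (Finset.image_eq_self_iff_of_bijective φ.bijective).mp hφ
  refine (Finset.image_eq_self_iff_of_bijective φ.bijective).mpr fun v => ?_
  rw [mem_dominantCore, mem_dominantCore, MaximalFor, MaximalFor, φ.surjective.forall]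
  simp only [hmem, neighborSetIn_map φ hφ, Set.image_subset_image_iff φ.injective]

end SimpleGraph

def IsBicliquePartition (G : SimpleGraph V) (s A B : Finset V) : Prop :=
  A.Nonempty ∧ B.Nonempty ∧ Disjoint A B ∧ A ∪ B = s ∧
    ∀ a ∈ s, ∀ b ∈ s, (G.Adj a b ↔ ((a ∈ A ∧ b ∈ B) ∨ (a ∈ B ∧ b ∈ A)))

namespace IsBicliquePartition

theorem mem_or_mem (h : IsBicliquePartition G s A B) (hv : v ∈ s) : v ∈ A ∨ v ∈ B :=
  Finset.mem_union.mp (h.2.2.2.1 ▸ hv)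

theorem symm (h : IsBicliquePartition G s A B) : IsBicliquePartition G s B A := by
  obtain ⟨hA, hB, hAB, hs, hadj⟩ := h
  exact ⟨hB, hA, hAB.symm, Finset.union_comm A B ▸ hs,
    fun a ha b hb => (hadj a ha b hb).trans or_comm⟩

theorem mem_left_of_not_adj (h : IsBicliquePartition G s A B) (hv : v ∈ A) (hu : u ∈ s)
    (hvu : ¬G.Adj v u) : u ∈ A := by
  obtain ⟨-, -, -, hs, hadj⟩ := h
  have hvs : v ∈ s := hs ▸ Finset.mem_union_left B hv
  rcases Finset.mem_union.mp (hs ▸ hu) with huA | huB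
  · exact huA
  · exact absurd ((hadj v hvs u hu).mpr (Or.inl ⟨hv, huB⟩)) hvu

theorem erase_left (h : IsBicliquePartition G s A B) (hv : v ∈ A) (hu : u ∈ A) (huv : u ≠ v) :
    IsBicliquePartition G (s.erase v) (A.erase v) B := by
  obtain ⟨-, hB, hAB, hs, hadj⟩ := h
  have hvB : v ∉ B := Finset.disjoint_left.mp hAB hv
  refine ⟨⟨u, Finset.mem_erase.mpr ⟨huv, hu⟩⟩, hB,
    Finset.disjoint_of_subset_left (Finset.erase_subset v A) hAB, ?_, fun a ha b hb => ?_⟩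
  · rw [← hs, Finset.erase_union_distrib, Finset.erase_eq_of_notMem hvB]
  · rw [Finset.mem_erase] at ha hb
    simp only [Finset.mem_erase, ha.1, hb.1, ne_eq, not_false_eq_true, true_and]
    exact hadj a ha.2 b hb.2

theorem insert_left (h : IsBicliquePartition G s A B) (hx : x ∈ A) (hw : w ∉ s)
    (htwin : ∀ y ∈ s, G.Adj w y ↔ G.Adj x y) :
    IsBicliquePartition G (insert w s) (insert w A) B := by
  obtain ⟨-, hB, hAB, hs, hadj⟩ := h
  have hxs : x ∈ s := hs ▸ Finset.mem_union_left B hx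
  have hwB : w ∉ B := fun hwB => hw (hs ▸ Finset.mem_union_right A hwB)
  have hw_adj : ∀ y ∈ insert w s, G.Adj w y ↔ y ∈ B := by
    intro y hy
    rcases Finset.mem_insert.mp hy with rfl | hy
    · simp [hwB]
    · rw [htwin y hy, hadj x hxs y hy]
      have := Finset.disjoint_left.mp hAB hx
      tauto
  refine ⟨Finset.insert_nonempty w A, hB, Finset.disjoint_insert_left.mpr ⟨hwB, hAB⟩,
    by rw [Finset.insert_union, hs], fun a ha b hb => ?_⟩
  rcases Finset.mem_insert.mp ha with rfl | ha' <;> rcases Finset.mem_insert.mp hb with rfl | hb'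
  · simp [hwB]
  · rw [hw_adj b hb]
    simp [hwB]
  · rw [G.adj_comm, hw_adj a ha]
    simp [hwB]
  · rw [hadj a ha' b hb']
    have haw : a ≠ w := fun h => hw (h ▸ ha')
    have hbw : b ≠ w := fun h => hw (h ▸ hb')
    simp [haw, hbw]

theorem image (h : IsBicliquePartition G s A B) (e : V ≃ V)
    (he : ∀ a ∈ s, ∀ b ∈ s, G.Adj (e a) (e b) ↔ G.Adj a b) :
    IsBicliquePartition G (s.image e) (A.image e) (B.image e) := by
  obtain ⟨hA, hB, hAB, hs, hadj⟩ := h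
  refine ⟨hA.image e, hB.image e, (Finset.disjoint_image e.injective).mpr hAB,
    by rw [← Finset.image_union, hs], ?_⟩
  simp only [Finset.forall_mem_image, e.injective.mem_finset_image]
  exact fun a ha b hb => (he a ha b hb).trans (hadj a ha b hb)

end IsBicliquePartition

theorem IsBiclique.erase (h : IsBiclique G s) (hvu : BiDominatedIn G s v u) :
    IsBiclique G (s.erase v) := by
  obtain ⟨A, B, hP⟩ : ∃ A B, IsBicliquePartition G s A B := h
  wlog hvA : v ∈ A generalizing A B
  · exact this B A hP.symm ((hP.mem_or_mem hvu.1).resolve_left hvA)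
  have huA := hP.mem_left_of_not_adj hvA hvu.2.1 hvu.not_adj
  exact ⟨_, _, hP.erase_left hvA huA hvu.2.2.1.symm⟩

theorem IsBiclique.insert_twin (h : IsBiclique G s) (hx : x ∈ s) (hw : w ∉ s)
    (htwin : ∀ y ∈ s, G.Adj w y ↔ G.Adj x y) : IsBiclique G (insert w s) := by
  obtain ⟨A, B, hP⟩ : ∃ A B, IsBicliquePartition G s A B := h
  wlog hxA : x ∈ A generalizing A B
  · exact this B A hP.symm ((hP.mem_or_mem hx).resolve_left hxA)
  exact ⟨_, _, hP.insert_left hxA hw htwin⟩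

theorem IsBiclique.image (h : IsBiclique G s) (e : V ≃ V)
    (he : ∀ a ∈ s, ∀ b ∈ s, G.Adj (e a) (e b) ↔ G.Adj a b) : IsBiclique G (s.image e) :=
  let ⟨_, _, hP⟩ := h
  ⟨_, _, IsBicliquePartition.image hP e he⟩

theorem BiDismantlable.image (h : BiDismantlable G s) (e : V ≃ V)
    (he : ∀ a ∈ s, ∀ b ∈ s, G.Adj (e a) (e b) ↔ G.Adj a b) :
    BiDismantlable G (s.image e) := by
  induction h with
  | biclique s hs => exact .biclique _ (hs.image e he)
  | step s v u hvu _ ih =>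
    refine .step _ (e v) (e u) ⟨Finset.mem_image_of_mem e hvu.1,
      Finset.mem_image_of_mem e hvu.2.1, e.injective.ne hvu.2.2.1, ?_⟩ ?_
    · simp only [Finset.forall_mem_image]
      exact fun y hy hvy => (he u hvu.2.1 y hy).mpr (hvu.2.2.2 y hy ((he v hvu.1 y hy).mp hvy))
    · rw [← Finset.image_erase e.injective]
      exact ih fun a ha b hb => he a (Finset.mem_of_mem_erase ha) b (Finset.mem_of_mem_erase hb)

theorem BiDismantlable.erase_of_twins (h : BiDismantlable G (s.erase w)) (hv : v ∈ s)
    (hw : w ∈ s) (htwin : ∀ y ∈ s, G.Adj v y ↔ G.Adj w y) :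
    BiDismantlable G (s.erase v) := by
  rw [← s.image_swap_erase hv hw]
  refine h.image _ fun a ha b hb => ?_
  have ha' := Finset.mem_of_mem_erase ha
  have hb' := s.swap_apply_mem hv hw (Finset.mem_of_mem_erase hb)
  rw [adj_swap_apply_iff htwin a hb', G.adj_comm, adj_swap_apply_iff htwin b ha', G.adj_comm]

theorem BiDominatedIn.exists_erase (hvu : BiDominatedIn G s v u) (hwx : BiDominatedIn G s w x)
    (hvw : v ≠ w) (hnot : ¬(u = w ∧ x = v)) : ∃ u', BiDominatedIn G (s.erase w) v u' := by
  have hv : v ∈ s.erase w := Finset.mem_erase.mpr ⟨hvw, hvu.1⟩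
  by_cases huw : u = w
  · subst huw
    have hxv : x ≠ v := fun hxv => hnot ⟨rfl, hxv⟩
    refine ⟨x, hv, Finset.mem_erase.mpr ⟨hwx.2.2.1.symm, hwx.2.1⟩, hxv.symm,
      fun y hy hvy => ?_⟩
    have hy' := Finset.mem_of_mem_erase hy
    exact hwx.2.2.2 y hy' (hvu.2.2.2 y hy' hvy)
  · exact ⟨u, hvu.mono (s.erase_subset w) hv (Finset.mem_erase.mpr ⟨huw, hvu.2.1⟩)⟩

theorem BiDismantlable.erase (h : BiDismantlable G s) (hvu : BiDominatedIn G s v u) :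
    BiDismantlable G (s.erase v) := by
  induction h generalizing v u with
  | biclique s hs => exact .biclique _ (hs.erase hvu)
  | step s w x hwx hdism ih =>
    by_cases hvw : v = w
    · exact hvw ▸ hdism
    by_cases htwins : u = w ∧ x = v
    · obtain ⟨rfl, rfl⟩ := htwins
      exact hdism.erase_of_twins hvu.1 hwx.1 fun y hy => ⟨hvu.2.2.2 y hy, hwx.2.2.2 y hy⟩
    obtain ⟨u', hvu'⟩ := hvu.exists_erase hwx hvw htwins
    obtain ⟨x', hwx'⟩ := hwx.exists_erase hvu (Ne.symm hvw) fun h => htwins ⟨h.2, h.1⟩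
    exact .step _ w x' hwx' (by rw [Finset.erase_right_comm]; exact ih hvu')

theorem BiDominatedIn.of_erase_twin (h : BiDominatedIn G (s.erase w) v u) (hw : w ∈ s)
    (hx : x ∈ s.erase w) (htwin : ∀ y ∈ s, G.Adj w y ↔ G.Adj x y) :
    BiDominatedIn G s v u := by
  refine ⟨Finset.mem_of_mem_erase h.1, Finset.mem_of_mem_erase h.2.1, h.2.2.1,
    fun y hy hvy => ?_⟩
  rcases eq_or_ne y w with rfl | hyw
  · have hvx : G.Adj v x := ((htwin v (Finset.mem_of_mem_erase h.1)).mp hvy.symm).symm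
    exact ((htwin u (Finset.mem_of_mem_erase h.2.1)).mpr (h.2.2.2 x hx hvx).symm).symm
  · exact h.2.2.2 y (Finset.mem_erase.mpr ⟨hyw, hy⟩) hvy

theorem BiDismantlable.isBiclique_of_biDominatedIn_symm (h : BiDismantlable G s)
    (hsymm : ∀ v u, BiDominatedIn G s v u → BiDominatedIn G s u v) : IsBiclique G s := by
  induction h with
  | biclique s hs => exact hs
  | step s w x hwx _ ih =>
    have htwin : ∀ y ∈ s, G.Adj w y ↔ G.Adj x y :=
      fun y hy => ⟨hwx.2.2.2 y hy, (hsymm w x hwx).2.2.2 y hy⟩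
    have hx : x ∈ s.erase w := Finset.mem_erase.mpr ⟨hwx.2.2.1.symm, hwx.2.1⟩
    have hbiclique : IsBiclique G (s.erase w) := ih fun v u hvu =>
      (hsymm v u (hvu.of_erase_twin hwx.1 hx htwin)).mono (s.erase_subset w) hvu.2.1 hvu.1
    simpa only [Finset.insert_erase hwx.1] using hbiclique.insert_twin hx (s.notMem_erase w)
      fun y hy => htwin y (Finset.mem_of_mem_erase hy)

theorem BiDismantlable.subset_of_biDominatedIn (h : BiDismantlable G s) (hts : t ⊆ s)
    (hdom : ∀ v ∈ s, v ∉ t → ∃ u ∈ t, BiDominatedIn G s v u) : BiDismantlable G t := by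
  induction s using Finset.strongInduction with
  | H s ih =>
    by_cases hst : s = t
    · exact hst ▸ h
    obtain ⟨v, hvs, hvt⟩ := Finset.exists_of_ssubset (hts.ssubset_of_ne (Ne.symm hst))
    obtain ⟨u, hut, hvu⟩ := hdom v hvs hvt
    have hts' : t ⊆ s.erase v :=
      fun y hy => Finset.mem_erase.mpr ⟨fun h => hvt (h ▸ hy), hts hy⟩
    refine ih _ (Finset.erase_ssubset hvs) (h.erase hvu) hts' fun y hy hyt => ?_
    obtain ⟨u', hu't, hyu'⟩ := hdom y (Finset.mem_of_mem_erase hy) hyt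
    exact ⟨u', hu't, hyu'.mono (s.erase_subset v) hy (hts' hu't)⟩

theorem BiDismantlable.dominantCore (h : BiDismantlable G s) :
    BiDismantlable G (G.dominantCore s) :=
  h.subset_of_biDominatedIn dominantCore_subset fun v hv hvc => by
    obtain ⟨u, hu, hvu⟩ := exists_mem_dominantCore_neighborSetIn_subset (G := G) hv
    exact ⟨u, hu, hv, dominantCore_subset hu, fun h => hvc (h ▸ hu),
      neighborSetIn_subset_iff.mp hvu⟩

theorem BiDismantlable.exists_isBiclique_image_eq (h : BiDismantlable G s) :
    ∃ t, IsBiclique G t ∧ ∀ φ : G ≃g G, s.image φ = s → t.image φ = t := by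
  induction s using Finset.strongInduction with
  | H s ih =>
    by_cases hcore : G.dominantCore s = s
    · exact ⟨s, h.isBiclique_of_biDominatedIn_symm fun _ _ hvu =>
        hvu.symm_of_dominantCore_eq hcore, fun _ => id⟩
    obtain ⟨t, ht, htφ⟩ := ih _ (dominantCore_subset.ssubset_of_ne hcore) h.dominantCore
    exact ⟨t, ht, fun φ hφ => htφ φ (image_dominantCore φ hφ)⟩

end

theorem biDismantlable_invariant_biclique_general {V : Type*} [Fintype V] [DecidableEq V]
    (G : SimpleGraph V)
    (hd : BiDismantlable G Finset.univ) :
    ∃ s : Finset V, IsBiclique G s ∧ ∀ φ : G ≃g G, s.image φ = s := by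
  obtain ⟨s, hs, hφ⟩ := hd.exists_isBiclique_image_eq
  exact ⟨s, hs, fun φ => hφ φ (Finset.image_univ_of_surjective φ.surjective)⟩

/-- A finite bi-dismantlable graph with more than one vertex has a biclique whose
vertex set is stabilized (setwise) by every automorphism. -/
theorem biDismantlable_invariant_biclique {V : Type*} [Fintype V] [DecidableEq V]
    (G : SimpleGraph V)
    (hd : BiDismantlable G Finset.univ)
    (hcard : 1 < Fintype.card V) :
    ∃ s : Finset V, IsBiclique G s ∧ ∀ φ : G ≃g G, s.image φ = s :=
  biDismantlable_invariant_biclique_general G hd
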